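/- Let k be algebraically closed of characteristic 0, n ≥ 4, and p ∈ k[z] a polynomial. Consider the superalgebra automorphism φ of k[z][ζ]/(ζ²) given by φ(z) = z, φ(ζ) = e·ζ for e ∈ k*. Then φ pulls back the 1-form ω = dz + p(z)·ζ·dζ to dz + e²·p(z)·ζ·dζ; hence φ preserves the line spanned by ω (i.e., φ*ω = ω) iff e² = 1, so the group of such automorphisms fixing ω is {±1} ≅ ℤ/2ℤ. -/

import Mathlib

open Polynomial

/-- Pullback of a 1-form `f·dz + g·dζ` on `k[z][ζ]/(ζ²)` (coefficients `f = f₀ + ζf₁`,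
`g = g₀ + ζg₁` modelled as pairs of polynomials) along the automorphism
`z ↦ z, ζ ↦ e·ζ`:  `φ*(f dz + g dζ) = φ(f)·dz + e·φ(g)·dζ` with `φ(a + ζb) = a + eζb`. -/
noncomputable def pullbackForm {k : Type*} [Field k] (e : k)
    (ω : (k[X] × k[X]) × (k[X] × k[X])) : (k[X] × k[X]) × (k[X] × k[X]) :=
  ((ω.1.1, C e * ω.1.2), (C e * ω.2.1, C (e ^ 2) * ω.2.2))

theorem Units.card_sq_eq_one {R : Type*} [CommRing R] [IsDomain R] (hR : ringChar R ≠ 2) :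
    Nat.card {u : Rˣ // (u : R) ^ 2 = 1} = 2 := by
  calc Nat.card {u : Rˣ // (u : R) ^ 2 = 1}
      = Nat.card (rootsOfUnity 2 R) := Nat.card_congr <| Equiv.subtypeEquivRight fun u => by
        rw [mem_rootsOfUnity, Units.ext_iff, Units.val_pow_eq_pow_val, Units.val_one]
    _ = 2 := (IsPrimitiveRoot.neg_one (R := R) (ringChar R) hR).card_rootsOfUnity

section SusyForm

variable {k : Type*} [Field k] (e : k) (p : k[X])

theorem pullbackForm_susyForm :
    pullbackForm e ((1, 0), (0, p)) = ((1, 0), (0, C (e ^ 2) * p)) := by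
  simp [pullbackForm]

theorem pullbackForm_susyForm_eq_self_iff {p : k[X]} (hp : p ≠ 0) :
    pullbackForm e ((1, 0), (0, p)) = ((1, 0), (0, p)) ↔ e ^ 2 = 1 := by
  rw [pullbackForm_susyForm]
  simp only [Prod.mk.injEq, true_and, mul_eq_right₀ hp, ← C_1, C_inj]

end SusyForm

theorem pullback_susy_form_general
    {k : Type*} [Field k] [CharZero k]
    (p : k[X]) (hp : p ≠ 0) (e : kˣ) :
    pullbackForm (e : k) (((1 : k[X]), (0 : k[X])), ((0 : k[X]), p)) =
      (((1 : k[X]), (0 : k[X])), ((0 : k[X]), C ((e : k) ^ 2) * p)) ∧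
    (pullbackForm (e : k) (((1 : k[X]), (0 : k[X])), ((0 : k[X]), p)) =
        (((1 : k[X]), (0 : k[X])), ((0 : k[X]), p)) ↔ (e : k) ^ 2 = 1) ∧
    Nat.card {u : kˣ // (u : k) ^ 2 = 1} = 2 :=
  ⟨pullbackForm_susyForm _ p, pullbackForm_susyForm_eq_self_iff _ hp,
    Units.card_sq_eq_one (by simp [ringChar.eq_zero])⟩

/-- Let `k` be algebraically closed of characteristic `0`, `n ≥ 4`, and `p ∈ k[z]`
nonzero (of degree `n`).  The automorphism `φ(z) = z`, `φ(ζ) = e·ζ` (`e ∈ k*`) pulls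
back the 1-form `ω = dz + p(z)·ζ·dζ` to `dz + e²·p(z)·ζ·dζ`; hence `φ*ω = ω` iff
`e² = 1`, so the group of such automorphisms fixing `ω` is `{±1} ≅ ℤ/2ℤ`. -/
theorem pullback_susy_form
    {k : Type*} [Field k] [IsAlgClosed k] [CharZero k]
    (n : ℕ) (hn : 4 ≤ n) (p : k[X]) (hp : p ≠ 0) (hdeg : p.natDegree = n) (e : kˣ) :
    pullbackForm (e : k) (((1 : k[X]), (0 : k[X])), ((0 : k[X]), p)) =
      (((1 : k[X]), (0 : k[X])), ((0 : k[X]), C ((e : k) ^ 2) * p)) ∧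
    (pullbackForm (e : k) (((1 : k[X]), (0 : k[X])), ((0 : k[X]), p)) =
        (((1 : k[X]), (0 : k[X])), ((0 : k[X]), p)) ↔ (e : k) ^ 2 = 1) ∧
    Nat.card {u : kˣ // (u : k) ^ 2 = 1} = 2 :=
  pullback_susy_form_general p hp e
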